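/- arXiv:1008.1081 — 2 statements merged into one kernel-verified Lean document; each statement's English description precedes it below -/
import Mathlib

section
/- (Theorem 5.1, adjoint.) Let Ã ∈ M be closed, corresponding to T : V → W. Then the adjoint Ã* satisfies A'_min ⊂ Ã* ⊂ A'_max and D(Ã*) = {v ∈ D(A'_max) : v_{ζ'} ∈ D(T*) and pr_V(A'_max v) = T* v_{ζ'}}, where T* : D(T*) ⊂ W → V is the Hilbert-space adjoint of T regarded as a densely defined operator from the Hilbert space V to the Hilbert space W. -/
/-!
Because `A_min ⊂ Ã ⊂ A_max`, the adjoint `Ã*` lies between `A'_min` and `A'_max`, so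
`v ∈ D(A'_max)` belongs to `D(Ã*)` iff `⟪A_max u, v⟫ = ⟪u, A'_max v⟫` for all `u ∈ D(Ã)`.
In this Green's formula the `A_γ^{-1}`- and `(A_γ^*)^{-1}`-parts of `u` and `v` cancel, leaving
`⟪A_max u, v_ζ'⟫ = ⟪u_ζ, A'_max v⟫`. Once `v_ζ' ∈ W`, the projections `pr_W` and `pr_V` may be
inserted on the two sides (as `u_ζ ∈ V`), and the condition becomes `⟪T u_ζ, v_ζ'⟫ =
⟪u_ζ, pr_V A'_max v⟫` on `D(T)`, i.e. `v_ζ' ∈ D(T*)` with `T* v_ζ' = pr_V A'_max v`.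
-/

noncomputable section

open Filter Topology

namespace GrubbExt

variable {H : Type*} [NormedAddCommGroup H] [InnerProductSpace ℂ H] [CompleteSpace H]

/-- The inclusion of a closed subspace composed with the orthogonal projection onto it,
as a continuous linear map `H →L[ℂ] H`.  This is `i_K ∘ pr_K` in the notation of the paper. -/
def projCl (K : Submodule ℂ H) (hK : IsClosed (K : Set H)) : H →L[ℂ] H :=
  haveI : CompleteSpace K := hK.completeSpace_coe
  K.subtypeL.comp K.orthogonalProjectionOnto

/-- `R` is the (everywhere defined, bounded) inverse of `P - lam`. -/
structure IsResolvent (P : H →ₗ.[ℂ] H) (lam : ℂ) (R : H →L[ℂ] H) : Prop where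
  mem : ∀ f : H, R f ∈ P.domain
  left : ∀ u : P.domain, R (P u - lam • (u : H)) = u
  right : ∀ f : H, P ⟨R f, mem f⟩ - lam • R f = f

/-- `E^λ := I + λ(A_γ - λ)^{-1}`, given the resolvent `R = (A_γ - λ)^{-1}`. -/
def Eop (lam : ℂ) (R : H →L[ℂ] H) : H →L[ℂ] H := ContinuousLinearMap.id ℂ H + lam • R

/-- `E'^{λ̄} := I + λ̄(A_γ^* - λ̄)^{-1}`, given the resolvent `R' = (A_γ^* - λ̄)^{-1}`. -/
def Eop' (lam : ℂ) (R' : H →L[ℂ] H) : H →L[ℂ] H :=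
  ContinuousLinearMap.id ℂ H + (starRingEnd ℂ lam) • R'

/-- The resolvent set of a partially defined operator. -/
def resSet (P : H →ₗ.[ℂ] H) : Set ℂ := {lam | ∃ R : H →L[ℂ] H, IsResolvent P lam R}

/-- The set of "Rayleigh quotients" `Re⟨Pu,u⟩` over unit vectors `u` in the domain of `P`;
the lower bound `m(P)` is the infimum of this set. -/
def raySet (P : H →ₗ.[ℂ] H) : Set ℝ :=
  {r | ∃ u : P.domain, ‖(u : H)‖ = 1 ∧ r = (inner ℂ (P u) (u : H) : ℂ).re}

/-- The abstract set-up of Grubb's extension theory: a dual pair `A_min, A'_min` of closed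
densely defined operators in a Hilbert space `H`, together with a reference operator `A_γ`
lying between `A_min` and `A_max := (A'_min)*`, which is bijective with bounded inverse
(and whose adjoint is likewise bijective with bounded inverse). -/
structure Setup (H : Type*) [NormedAddCommGroup H] [InnerProductSpace ℂ H]
    [CompleteSpace H] where
  Amin : H →ₗ.[ℂ] H
  Amin' : H →ₗ.[ℂ] H
  closed_Amin : IsClosed (Amin.graph : Set (H × H))
  closed_Amin' : IsClosed (Amin'.graph : Set (H × H))
  dense_Amin : Dense (Amin.domain : Set H)
  dense_Amin' : Dense (Amin'.domain : Set H)
  Amin_le_max : Amin ≤ Amin'.adjoint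
  Amin'_le_max' : Amin' ≤ Amin.adjoint
  Agam : H →ₗ.[ℂ] H
  Amin_le_Agam : Amin ≤ Agam
  Agam_le_max : Agam ≤ Amin'.adjoint
  Agaminv : H →L[ℂ] H
  Agaminv_mem : ∀ f : H, Agaminv f ∈ Agam.domain
  Agaminv_left : ∀ u : Agam.domain, Agaminv (Agam u) = u
  Agaminv_right : ∀ f : H, Agam ⟨Agaminv f, Agaminv_mem f⟩ = f
  Agamstarinv : H →L[ℂ] H
  Agamstarinv_mem : ∀ f : H, Agamstarinv f ∈ Agam.adjoint.domain
  Agamstarinv_left : ∀ v : Agam.adjoint.domain, Agamstarinv (Agam.adjoint v) = v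
  Agamstarinv_right : ∀ f : H, Agam.adjoint ⟨Agamstarinv f, Agamstarinv_mem f⟩ = f

namespace Setup

variable (S : Setup H)

/-- `A_max := (A'_min)*`. -/
def Amax : H →ₗ.[ℂ] H := S.Amin'.adjoint

/-- `A'_max := (A_min)*`. -/
def Amax' : H →ₗ.[ℂ] H := S.Amin.adjoint

/-- `u_ζ := u - A_γ^{-1} A_max u`, the nullspace component of `u ∈ D(A_max)`. -/
def uzeta (u : S.Amax.domain) : H := (u : H) - S.Agaminv (S.Amax u)

/-- `v_{ζ'} := v - (A_γ^*)^{-1} A'_max v`, the nullspace component of `v ∈ D(A'_max)`. -/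
def vzeta (v : S.Amax'.domain) : H := (v : H) - S.Agamstarinv (S.Amax' v)

/-- `Z := ker A_max`, as a submodule of `H`. -/
def Zker : Submodule ℂ H := (LinearMap.ker S.Amax.toFun).map S.Amax.domain.subtype

/-- `Z' := ker A'_max`, as a submodule of `H`. -/
def Zker' : Submodule ℂ H := (LinearMap.ker S.Amax'.toFun).map S.Amax'.domain.subtype

lemma coe_Zker :
    (S.Zker : Set H) = ⋂ v : S.Amin'.domain, {y : H | (inner ℂ y (S.Amin' v) : ℂ) = 0} := by
  ext y
  simp only [Set.mem_iInter, Set.mem_setOf_eq, SetLike.mem_coe, Zker, Submodule.mem_map,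
    LinearMap.mem_ker]
  constructor
  · rintro ⟨u, hu, rfl⟩ v
    have h := (LinearPMap.adjoint_isFormalAdjoint S.dense_Amin') u v
    have hu' : S.Amin'.adjoint u = 0 := hu
    rw [hu'] at h
    simpa using h.symm
  · intro h
    have hmem : y ∈ S.Amax.domain := by
      refine LinearPMap.mem_adjoint_domain_of_exists _ ⟨0, fun x => ?_⟩
      simp [h x]
    refine ⟨⟨y, hmem⟩, ?_, rfl⟩
    exact LinearPMap.adjoint_apply_eq S.dense_Amin' ⟨y, hmem⟩ fun x => by simp [h x]

lemma isClosed_Zker : IsClosed (S.Zker : Set H) := by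
  rw [S.coe_Zker]
  exact isClosed_iInter fun v =>
    isClosed_eq (Continuous.inner continuous_id continuous_const) continuous_const

lemma coe_Zker' :
    (S.Zker' : Set H) = ⋂ v : S.Amin.domain, {y : H | (inner ℂ y (S.Amin v) : ℂ) = 0} := by
  ext y
  simp only [Set.mem_iInter, Set.mem_setOf_eq, SetLike.mem_coe, Zker', Submodule.mem_map,
    LinearMap.mem_ker]
  constructor
  · rintro ⟨u, hu, rfl⟩ v
    have h := (LinearPMap.adjoint_isFormalAdjoint S.dense_Amin) u v
    have hu' : S.Amin.adjoint u = 0 := hu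
    rw [hu'] at h
    simpa using h.symm
  · intro h
    have hmem : y ∈ S.Amax'.domain := by
      refine LinearPMap.mem_adjoint_domain_of_exists _ ⟨0, fun x => ?_⟩
      simp [h x]
    refine ⟨⟨y, hmem⟩, ?_, rfl⟩
    exact LinearPMap.adjoint_apply_eq S.dense_Amin ⟨y, hmem⟩ fun x => by simp [h x]

lemma isClosed_Zker' : IsClosed (S.Zker' : Set H) := by
  rw [S.coe_Zker']
  exact isClosed_iInter fun v =>
    isClosed_eq (Continuous.inner continuous_id continuous_const) continuous_const

/-- The orthogonal projection onto `Z = ker A_max`. -/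
def projZ : H →L[ℂ] H := projCl S.Zker S.isClosed_Zker

/-- The orthogonal projection onto `Z' = ker A'_max`. -/
def projZ' : H →L[ℂ] H := projCl S.Zker' S.isClosed_Zker'

variable (At : H →ₗ.[ℂ] H)

/-- `D(T) = {u_ζ : u ∈ D(Ã)}`, the set of nullspace components of elements of `D(Ã)`. -/
def dzeta : Set H := {x | ∃ u : S.Amax.domain, (u : H) ∈ At.domain ∧ x = S.uzeta u}

/-- `{v_{ζ'} : v ∈ D(Ã*)}`. -/
def dzeta' : Set H := {x | ∃ v : S.Amax'.domain, (v : H) ∈ At.adjoint.domain ∧ x = S.vzeta v}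

/-- `V := closure {u_ζ : u ∈ D(Ã)}`. -/
def Vsub : Submodule ℂ H := (Submodule.span ℂ (S.dzeta At)).topologicalClosure

/-- `W := closure {v_{ζ'} : v ∈ D(Ã*)}`. -/
def Wsub : Submodule ℂ H := (Submodule.span ℂ (S.dzeta' At)).topologicalClosure

lemma isClosed_Vsub : IsClosed ((S.Vsub At : Set H)) :=
  Submodule.isClosed_topologicalClosure _

lemma isClosed_Wsub : IsClosed ((S.Wsub At : Set H)) :=
  Submodule.isClosed_topologicalClosure _

/-- The orthogonal projection onto `V`. -/
def projV : H →L[ℂ] H := projCl (S.Vsub At) (S.isClosed_Vsub At)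

/-- The orthogonal projection onto `W`. -/
def projW : H →L[ℂ] H := projCl (S.Wsub At) (S.isClosed_Wsub At)

/-- The set `{(u_ζ, pr_W (A_max u)) : u ∈ D(Ã)}`, for a general closed subspace `W`. -/
def TgraphOn (W : Submodule ℂ H) (hW : IsClosed (W : Set H)) : Set (H × H) :=
  {p | ∃ u : S.Amax.domain, (u : H) ∈ At.domain ∧ p.1 = S.uzeta u ∧
    p.2 = projCl W hW (S.Amax u)}

/-- The graph of the operator `T : V → W` corresponding to `Ã`. -/
def Tgraph : Set (H × H) := S.TgraphOn At (S.Wsub At) (S.isClosed_Wsub At)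


/-- `F^λ := I - λ A_γ^{-1}`. -/
def Fop (lam : ℂ) : H →L[ℂ] H := ContinuousLinearMap.id ℂ H - lam • S.Agaminv

/-- `F'^{λ̄} := I - λ̄ (A_γ^*)^{-1}`. -/
def Fop' (lam : ℂ) : H →L[ℂ] H := ContinuousLinearMap.id ℂ H - (starRingEnd ℂ lam) • S.Agamstarinv

/-- `Z_λ := ker(A_max - λ)`, as a subset of `H`. -/
def ZkerL (lam : ℂ) : Set H :=
  {x | ∃ hx : x ∈ S.Amax.domain, S.Amax ⟨x, hx⟩ = lam • x}

/-- `Z'_{λ̄} := ker(A'_max - λ̄)`, as a subset of `H`. -/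
def ZkerL' (lam : ℂ) : Set H :=
  {x | ∃ hx : x ∈ S.Amax'.domain, S.Amax' ⟨x, hx⟩ = (starRingEnd ℂ lam) • x}

/-- `pr^λ_ζ u := u - (A_γ - λ)^{-1}(A_max - λ)u`, given the resolvent `R = (A_γ - λ)^{-1}`. -/
def uzetaL (lam : ℂ) (R : H →L[ℂ] H) (u : S.Amax.domain) : H :=
  (u : H) - R (S.Amax u - lam • (u : H))

/-- `pr^{λ̄}_{ζ'} v := v - (A_γ^* - λ̄)^{-1}(A'_max - λ̄)v`,
given the resolvent `R' = (A_γ^* - λ̄)^{-1}`. -/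
def vzetaL (lam : ℂ) (R' : H →L[ℂ] H) (v : S.Amax'.domain) : H :=
  (v : H) - R' (S.Amax' v - (starRingEnd ℂ lam) • (v : H))

/-- `D(T^λ) = {pr^λ_ζ u : u ∈ D(Ã)}`. -/
def dzetaL (lam : ℂ) (R : H →L[ℂ] H) : Set H :=
  {x | ∃ u : S.Amax.domain, (u : H) ∈ At.domain ∧ x = S.uzetaL lam R u}

/-- `{pr^{λ̄}_{ζ'} v : v ∈ D(Ã*)}`. -/
def dzetaL' (lam : ℂ) (R' : H →L[ℂ] H) : Set H :=
  {x | ∃ v : S.Amax'.domain, (v : H) ∈ At.adjoint.domain ∧ x = S.vzetaL lam R' v}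

/-- `V_λ := closure {pr^λ_ζ u : u ∈ D(Ã)}`. -/
def VLsub (lam : ℂ) (R : H →L[ℂ] H) : Submodule ℂ H :=
  (Submodule.span ℂ (S.dzetaL At lam R)).topologicalClosure

/-- `W_{λ̄} := closure {pr^{λ̄}_{ζ'} v : v ∈ D(Ã*)}`. -/
def WLsub (lam : ℂ) (R' : H →L[ℂ] H) : Submodule ℂ H :=
  (Submodule.span ℂ (S.dzetaL' At lam R')).topologicalClosure

lemma isClosed_WLsub (lam : ℂ) (R' : H →L[ℂ] H) : IsClosed ((S.WLsub At lam R' : Set H)) :=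
  Submodule.isClosed_topologicalClosure _

/-- The orthogonal projection onto `W_{λ̄}`. -/
def projWL (lam : ℂ) (R' : H →L[ℂ] H) : H →L[ℂ] H :=
  projCl (S.WLsub At lam R') (S.isClosed_WLsub At lam R')

/-- The graph of the operator `T^λ : V_λ → W_{λ̄}` corresponding to `Ã - λ`:
`{(pr^λ_ζ u, pr_{W_{λ̄}}((A_max - λ)u)) : u ∈ D(Ã)}`. -/
def TgraphL (lam : ℂ) (R R' : H →L[ℂ] H) : Set (H × H) :=
  {p | ∃ u : S.Amax.domain, (u : H) ∈ At.domain ∧ p.1 = S.uzetaL lam R u ∧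
    p.2 = S.projWL At lam R' (S.Amax u - lam • (u : H))}

/-- `G^λ_{V,W} x := -pr_W (λ E^λ x)`, where `W = W(Ã)`. -/
def Gval (lam : ℂ) (R : H →L[ℂ] H) (x : H) : H :=
  -(S.projW At (lam • Eop lam R x))

/-- `G^μ_{Z,Z} z := -pr_Z (μ E^μ z)`. -/
def GZval (lam : ℂ) (R : H →L[ℂ] H) (x : H) : H :=
  -(S.projZ (lam • Eop lam R x))

lemma mem_Amax_res {lam : ℂ} {Rt : H →L[ℂ] H} (h2 : At ≤ S.Amax)
    (hRt : IsResolvent At lam Rt) (w : H) :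
    S.Agaminv w - Rt (w - lam • S.Agaminv w) ∈ S.Amax.domain :=
  Submodule.sub_mem _ (S.Agam_le_max.1 (S.Agaminv_mem w)) (h2.1 (hRt.mem _))

/-- `M(λ) w := pr_ζ ((I - (Ã - λ)^{-1}(A_max - λ)) A_γ^{-1} w)`, the value of the abstract
`M`-function on `w`. -/
def Mval {lam : ℂ} {Rt : H →L[ℂ] H} (h2 : At ≤ S.Amax) (hRt : IsResolvent At lam Rt)
    (w : H) : H :=
  S.uzeta ⟨S.Agaminv w - Rt (w - lam • S.Agaminv w), S.mem_Amax_res At h2 hRt w⟩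

end Setup

section AdjointOrder

open LinearPMap

variable {𝕜 E F : Type*} [RCLike 𝕜] [NormedAddCommGroup E] [InnerProductSpace 𝕜 E]
  [NormedAddCommGroup F] [InnerProductSpace 𝕜 F]

theorem _root_.LinearPMap.adjoint_le_adjoint_of_le [CompleteSpace E]
    {S T : E →ₗ.[𝕜] F} (hS : Dense (S.domain : Set E)) (h : S ≤ T) :
    T.adjoint ≤ S.adjoint :=
  IsFormalAdjoint.le_adjoint hS fun x y => by
    rw [h.2 (y := ⟨x, h.1 x.2⟩) rfl]
    exact (adjoint_isFormalAdjoint (hS.mono h.1)).symm ⟨x, h.1 x.2⟩ y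

theorem _root_.LinearPMap.le_adjoint_of_le_adjoint [CompleteSpace E] [CompleteSpace F]
    {S : F →ₗ.[𝕜] E} {T : E →ₗ.[𝕜] F} (hS : Dense (S.domain : Set F))
    (hT : Dense (T.domain : Set E)) (h : S ≤ T.adjoint) : T ≤ S.adjoint :=
  IsFormalAdjoint.le_adjoint hS fun x y => by
    rw [h.2 (y := ⟨x, h.1 x.2⟩) rfl]
    exact adjoint_isFormalAdjoint hT ⟨x, h.1 x.2⟩ y

theorem _root_.LinearPMap.mem_adjoint_domain_iff_of_adjoint_le [CompleteSpace E]
    {T : E →ₗ.[𝕜] F} {B : F →ₗ.[𝕜] E} (hT : Dense (T.domain : Set E)) (hB : T.adjoint ≤ B)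
    (y : B.domain) :
    (y : F) ∈ T.adjoint.domain ↔
      ∀ x : T.domain, inner 𝕜 (T x) (y : F) = inner 𝕜 (x : E) (B y) := by
  constructor
  · intro hy x
    rw [← hB.2 (rfl : ((⟨y, hy⟩ : T.adjoint.domain) : F) = y), ← inner_conj_symm,
      ← adjoint_isFormalAdjoint hT ⟨y, hy⟩ x, inner_conj_symm]
  · intro h
    exact mem_adjoint_domain_of_exists _ ⟨B y, fun x => by rw [← inner_conj_symm, ← h x,
      inner_conj_symm]⟩

end AdjointOrder

theorem inner_projCl_left (K : Submodule ℂ H) (hK : IsClosed (K : Set H)) (x : H) {z : H}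
    (hz : z ∈ K) : inner ℂ (projCl K hK x) z = inner ℂ x z := by
  have : CompleteSpace K := hK.completeSpace_coe
  exact K.inner_orthogonalProjectionOnto_eq_of_mem_right ⟨z, hz⟩ x

theorem inner_projCl_right (K : Submodule ℂ H) (hK : IsClosed (K : Set H)) (x : H) {z : H}
    (hz : z ∈ K) : inner ℂ z (projCl K hK x) = inner ℂ z x := by
  have : CompleteSpace K := hK.completeSpace_coe
  exact K.inner_orthogonalProjectionOnto_eq_of_mem_left ⟨z, hz⟩ x

namespace Setup

variable (S : Setup H)

theorem inner_Agaminv (f g : H) :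
    inner ℂ (S.Agaminv f) g = inner ℂ f (S.Agamstarinv g) := by
  have h := LinearPMap.adjoint_isFormalAdjoint (S.dense_Amin.mono S.Amin_le_Agam.1)
    ⟨S.Agamstarinv g, S.Agamstarinv_mem g⟩ ⟨S.Agaminv f, S.Agaminv_mem f⟩
  rw [S.Agamstarinv_right, S.Agaminv_right] at h
  rw [← inner_conj_symm, h, inner_conj_symm]

theorem inner_Amax_vzeta_sub_inner_uzeta_Amax' (u : S.Amax.domain) (v : S.Amax'.domain) :
    inner ℂ (S.Amax u) (S.vzeta v) - inner ℂ (S.uzeta u) (S.Amax' v)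
      = inner ℂ (S.Amax u) (v : H) - inner ℂ (u : H) (S.Amax' v) := by
  simp only [vzeta, uzeta, inner_sub_left, inner_sub_right, S.inner_Agaminv]
  ring

variable {S} {At : H →ₗ.[ℂ] H}

theorem Amin'_le_adjoint (h1 : S.Amin ≤ At) (h2 : At ≤ S.Amax) : S.Amin' ≤ At.adjoint :=
  LinearPMap.le_adjoint_of_le_adjoint (S.dense_Amin.mono h1.1) S.dense_Amin' h2

theorem adjoint_le_Amax' (h1 : S.Amin ≤ At) : At.adjoint ≤ S.Amax' :=
  LinearPMap.adjoint_le_adjoint_of_le S.dense_Amin h1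

theorem mem_adjoint_domain_iff_inner_zeta (h1 : S.Amin ≤ At) (h2 : At ≤ S.Amax)
    (v : S.Amax'.domain) :
    (v : H) ∈ At.adjoint.domain ↔ ∀ u : S.Amax.domain, (u : H) ∈ At.domain →
      inner ℂ (S.Amax u) (S.vzeta v) = inner ℂ (S.uzeta u) (S.Amax' v) := by
  rw [LinearPMap.mem_adjoint_domain_iff_of_adjoint_le (S.dense_Amin.mono h1.1)
    (adjoint_le_Amax' h1)]
  refine ⟨fun h u hu => ?_, fun h x => ?_⟩
  · rw [← sub_eq_zero, S.inner_Amax_vzeta_sub_inner_uzeta_Amax', sub_eq_zero, ← h ⟨u, hu⟩]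
    exact congrArg (inner ℂ · (v : H)) (h2.2 rfl).symm
  · have hx := h ⟨x, h2.1 x.2⟩ x.2
    rw [← sub_eq_zero, S.inner_Amax_vzeta_sub_inner_uzeta_Amax', sub_eq_zero] at hx
    rwa [h2.2 (y := ⟨x, h2.1 x.2⟩) rfl]

theorem uzeta_mem_Vsub {u : S.Amax.domain} (hu : (u : H) ∈ At.domain) :
    S.uzeta u ∈ S.Vsub At :=
  Submodule.le_topologicalClosure _ (Submodule.subset_span ⟨u, hu, rfl⟩)

theorem vzeta_mem_Wsub {v : S.Amax'.domain} (hv : (v : H) ∈ At.adjoint.domain) :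
    S.vzeta v ∈ S.Wsub At :=
  Submodule.le_topologicalClosure _ (Submodule.subset_span ⟨v, hv, rfl⟩)

theorem forall_mem_Tgraph_iff {v : S.Amax'.domain} (hv : S.vzeta v ∈ S.Wsub At) :
    (∀ p ∈ S.Tgraph At, inner ℂ p.2 (S.vzeta v) = inner ℂ p.1 (S.projV At (S.Amax' v))) ↔
      ∀ u : S.Amax.domain, (u : H) ∈ At.domain →
        inner ℂ (S.Amax u) (S.vzeta v) = inner ℂ (S.uzeta u) (S.Amax' v) := by
  refine ⟨fun h u hu => ?_, ?_⟩
  · have hu' := h (S.uzeta u, S.projW At (S.Amax u)) ⟨u, hu, rfl, rfl⟩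
    rwa [projW, inner_projCl_left _ _ _ hv, projV,
      inner_projCl_right _ _ _ (uzeta_mem_Vsub hu)] at hu'
  · rintro h p ⟨u, hu, hp₁, hp₂⟩
    rw [hp₁, hp₂, inner_projCl_left _ _ _ hv, projV,
      inner_projCl_right _ _ _ (uzeta_mem_Vsub hu)]
    exact h u hu

end Setup

theorem statement_5_general (S : Setup H) (At : H →ₗ.[ℂ] H)
    (h1 : S.Amin ≤ At) (h2 : At ≤ S.Amax)
    (T : H →ₗ.[ℂ] H) (hT : (T.graph : Set (H × H)) = S.Tgraph At) :
    S.Amin' ≤ At.adjoint ∧ At.adjoint ≤ S.Amax' ∧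
    ∀ v : S.Amax'.domain,
      ((v : H) ∈ At.adjoint.domain ↔
        S.vzeta v ∈ S.Wsub At ∧
          ∀ p : H × H, p ∈ T.graph →
            (inner ℂ p.2 (S.vzeta v) : ℂ) = (inner ℂ p.1 (S.projV At (S.Amax' v)) : ℂ)) := by
  refine ⟨Setup.Amin'_le_adjoint h1 h2, Setup.adjoint_le_Amax' h1, fun v => ?_⟩
  have hT' (p : H × H) : p ∈ T.graph ↔ p ∈ S.Tgraph At := by rw [← SetLike.mem_coe, hT]
  simp only [hT']
  refine ⟨fun hv => ⟨Setup.vzeta_mem_Wsub hv, ?_⟩, fun ⟨hW, hTv⟩ => ?_⟩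
  · exact (Setup.forall_mem_Tgraph_iff (Setup.vzeta_mem_Wsub hv)).2
      ((Setup.mem_adjoint_domain_iff_inner_zeta h1 h2 v).1 hv)
  · exact (Setup.mem_adjoint_domain_iff_inner_zeta h1 h2 v).2
      ((Setup.forall_mem_Tgraph_iff hW).1 hTv)

theorem statement_5 (S : Setup H) (At : H →ₗ.[ℂ] H)
    (h1 : S.Amin ≤ At) (h2 : At ≤ S.Amax)
    (hcl : IsClosed (At.graph : Set (H × H)))
    (T : H →ₗ.[ℂ] H) (hT : (T.graph : Set (H × H)) = S.Tgraph At) :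
    S.Amin' ≤ At.adjoint ∧ At.adjoint ≤ S.Amax' ∧
    ∀ v : S.Amax'.domain,
      ((v : H) ∈ At.adjoint.domain ↔
        S.vzeta v ∈ S.Wsub At ∧
          ∀ p : H × H, p ∈ T.graph →
            (inner ℂ p.2 (S.vzeta v) : ℂ) = (inner ℂ p.1 (S.projV At (S.Amax' v)) : ℂ)) :=
  statement_5_general S At h1 h2 T hT

end GrubbExt
end
end

section
/- (Theorem 5.5, inversion and Kreĭn resolvent formula.) Let Ã ∈ M be closed, corresponding to T : V → W, and let λ ∈ ρ(Ã) ∩ ρ(A_γ), where ρ(Ã) := {λ ∈ ℂ : Ã − λ : D(Ã) → H is bijective with bounded inverse}. Then the operator T + G^λ_{V,W} with domain D(T) is a bijection of D(T) onto W, M(λ) = −(T + G^λ_{V,W})^{-1}, and (Ã − λ)^{-1} = (A_γ − λ)^{-1} − i_{V_λ} ∘ E^λ_V ∘ M(λ) ∘ (E'^{λ̄}_W)* ∘ pr_{W_{λ̄}}, where E^λ_V : V → V_λ and E'^{λ̄}_W : W → W_{λ̄} are the bijections obtained by restricting E^λ and E'^{λ̄}, and (E'^{λ̄}_W)* is the adjoint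 of E'^{λ̄}_W. -/
/-! For `u ∈ D(Ã)` one has `pr_W (A_max u) + G^λ u_ζ = pr_W (E^λ (A_max - λ) u)`. Taking
`u = (Ã - λ)⁻¹ (A_γ - λ) A_γ⁻¹ w` makes `E^λ (A_max - λ) u = w`, so for `w ∈ W`
`x = u_ζ` solves `T x + G^λ x = w`, and by construction `M(λ) w = -u_ζ`. Uniqueness comes
from Green's formula `⟨pr^λ̄_ζ' v, (A_max - λ) u⟩ = ⟨(Ã* - λ̄) v, E^λ u_ζ⟩`, the
surjectivity of `Ã* - λ̄` and the injectivity of `E^λ`. Kreĭn's formula is the case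
`u = (Ã - λ)⁻¹ f`, `w = pr_W (E^λ f)`: then `E^λ u_ζ = (Ã - λ)⁻¹ f - (A_γ - λ)⁻¹ f`, and
`(E'^λ̄_W)* pr_{W_λ̄} f = pr_W (E^λ f)` because `(E^λ)* = E'^λ̄`. -/

noncomputable section

open Filter Topology

namespace GrubbExt

open scoped ComplexConjugate

local notation "⟪" x ", " y "⟫" => @inner ℂ _ _ x y

variable {H : Type*} [NormedAddCommGroup H] [InnerProductSpace ℂ H]

lemma Eop_apply (lam : ℂ) (R : H →L[ℂ] H) (z : H) : Eop lam R z = z + lam • R z := rfl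

lemma Eop'_apply (lam : ℂ) (R' : H →L[ℂ] H) (z : H) : Eop' lam R' z = z + conj lam • R' z := rfl

lemma IsResolvent.apply_eq_add_smul {P : H →ₗ.[ℂ] H} {lam : ℂ} {R : H →L[ℂ] H}
    (hR : IsResolvent P lam R) (f : H) : P ⟨R f, hR.mem f⟩ = f + lam • R f :=
  eq_add_of_sub_eq (hR.right f)

variable [CompleteSpace H]

section ClosedSubspace

variable {K : Submodule ℂ H} (hK : IsClosed (K : Set H))

lemma projCl_eq_starProjection :
    haveI : CompleteSpace K := hK.completeSpace_coe
    projCl K hK = K.starProjection := rfl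

lemma projCl_mem (z : H) : projCl K hK z ∈ K := by
  have : CompleteSpace K := hK.completeSpace_coe
  rw [projCl_eq_starProjection]
  exact K.starProjection_apply_mem z

lemma projCl_eq_self {z : H} (hz : z ∈ K) : projCl K hK z = z := by
  have : CompleteSpace K := hK.completeSpace_coe
  rw [projCl_eq_starProjection]
  exact K.starProjection_eq_self_iff.mpr hz

lemma inner_projCl_left_s14 (z : H) {y : H} (hy : y ∈ K) : ⟪projCl K hK z, y⟫ = ⟪z, y⟫ := by
  have : CompleteSpace K := hK.completeSpace_coe
  rw [projCl_eq_starProjection, K.inner_starProjection_left_eq_right,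
    K.starProjection_eq_self_iff.mpr hy]

lemma inner_projCl_right_s14 {y : H} (hy : y ∈ K) (z : H) : ⟪y, projCl K hK z⟫ = ⟪y, z⟫ := by
  rw [← inner_conj_symm, inner_projCl_left_s14 hK z hy, inner_conj_symm]

end ClosedSubspace

lemma adjoint_le_adjoint_of_le {P Q : H →ₗ.[ℂ] H} (hP : Dense (P.domain : Set H)) (h : P ≤ Q) :
    Q.adjoint ≤ P.adjoint := by
  refine LinearPMap.IsFormalAdjoint.le_adjoint hP fun x y => ?_
  rw [h.2 (x := x) (y := ⟨x, h.1 x.2⟩) rfl]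
  exact (LinearPMap.adjoint_isFormalAdjoint (hP.mono h.1)).symm ⟨x, h.1 x.2⟩ y

namespace IsResolvent

variable {P : H →ₗ.[ℂ] H} {lam : ℂ} {R R' : H →L[ℂ] H}

lemma inner_apply_left (hP : Dense (P.domain : Set H)) (hR : IsResolvent P lam R)
    (hR' : IsResolvent P.adjoint (conj lam) R') (a b : H) : ⟪R a, b⟫ = ⟪a, R' b⟫ := by
  have hformal : ⟪P ⟨R a, hR.mem a⟩, R' b⟫ = ⟪R a, P.adjoint ⟨R' b, hR'.mem b⟩⟫ :=
    (LinearPMap.adjoint_isFormalAdjoint hP).symm ⟨_, hR.mem a⟩ ⟨_, hR'.mem b⟩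
  calc ⟪R a, b⟫ = ⟪R a, P.adjoint ⟨R' b, hR'.mem b⟩ - conj lam • R' b⟫ := by rw [hR'.right]
    _ = ⟪a, R' b⟫ := by
      rw [inner_sub_right, inner_smul_right, ← hformal, hR.apply_eq_add_smul, inner_add_left,
        inner_smul_left]
      ring

lemma inner_Eop_left (hP : Dense (P.domain : Set H)) (hR : IsResolvent P lam R)
    (hR' : IsResolvent P.adjoint (conj lam) R') (a b : H) :
    ⟪Eop lam R a, b⟫ = ⟪a, Eop' lam R' b⟫ := by
  rw [Eop_apply, Eop'_apply, inner_add_left, inner_add_right, inner_smul_left, inner_smul_right,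
    hR.inner_apply_left hP hR']

lemma inner_Eop_right (hP : Dense (P.domain : Set H)) (hR : IsResolvent P lam R)
    (hR' : IsResolvent P.adjoint (conj lam) R') (a b : H) :
    ⟪a, Eop lam R b⟫ = ⟪Eop' lam R' a, b⟫ := by
  rw [← inner_conj_symm, hR.inner_Eop_left hP hR', inner_conj_symm]

/-- `(P - λ)⁻¹*` is a right inverse of `P* - λ̄`. -/
lemma exists_adjoint_sub_smul_eq (hP : Dense (P.domain : Set H)) (hR : IsResolvent P lam R)
    (g : H) : ∃ v : P.adjoint.domain, P.adjoint v - conj lam • (v : H) = g := by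
  set v₀ := ContinuousLinearMap.adjoint R g
  have hv₀ : ∀ u : P.domain, ⟪g + conj lam • v₀, (u : H)⟫ = ⟪v₀, P u⟫ := by
    intro u
    have h : ⟪v₀, P u - lam • (u : H)⟫ = ⟪g, (u : H)⟫ := by
      rw [ContinuousLinearMap.adjoint_inner_left, hR.left u]
    rw [inner_sub_right, inner_smul_right, sub_eq_iff_eq_add] at h
    rw [h, inner_add_left, inner_smul_left, Complex.conj_conj]
  have hmem : v₀ ∈ P.adjoint.domain := LinearPMap.mem_adjoint_domain_of_exists _ ⟨_, hv₀⟩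
  refine ⟨⟨v₀, hmem⟩, ?_⟩
  rw [LinearPMap.adjoint_apply_eq hP ⟨v₀, hmem⟩ hv₀, add_sub_cancel_right]

end IsResolvent

namespace Setup

variable (S : Setup H) {lam : ℂ} {Rg RAt R' : H →L[ℂ] H} {At : H →ₗ.[ℂ] H}

lemma dense_Agam : Dense (S.Agam.domain : Set H) := S.dense_Amin.mono S.Amin_le_Agam.1

lemma uzeta_sub (u v : S.Amax.domain) : S.uzeta (u - v) = S.uzeta u - S.uzeta v := by
  simp only [uzeta, LinearPMap.map_sub, Submodule.coe_sub, map_sub]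
  abel

lemma uzeta_Agaminv (w : H) : S.uzeta ⟨S.Agaminv w, S.Agam_le_max.1 (S.Agaminv_mem w)⟩ = 0 := by
  have h : S.Amax ⟨S.Agaminv w, S.Agam_le_max.1 (S.Agaminv_mem w)⟩ = w := by
    exact (S.Agam_le_max.2 (x := ⟨_, S.Agaminv_mem w⟩) rfl).symm.trans (S.Agaminv_right w)
  rw [uzeta, h, sub_self]

lemma eq_zero_of_Eop_eq_zero (hRg : IsResolvent S.Agam lam Rg) {z : H}
    (hz : Eop lam Rg z = 0) : z = 0 := by
  have hA : S.Agam ⟨Rg z, hRg.mem z⟩ = 0 := by rw [hRg.apply_eq_add_smul]; exact hz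
  have hRz : Rg z = 0 := by simpa [hA] using (S.Agaminv_left ⟨Rg z, hRg.mem z⟩).symm
  rwa [Eop_apply, hRz, smul_zero, add_zero] at hz

lemma Eop_sub_smul_Agaminv (hRg : IsResolvent S.Agam lam Rg) (w : H) :
    Eop lam Rg (w - lam • S.Agaminv w) = w := by
  have h := hRg.left ⟨S.Agaminv w, S.Agaminv_mem w⟩
  rw [S.Agaminv_right] at h
  rw [Eop_apply, h, sub_add_cancel]

/-- `(A_max - λ) u = (A_γ - λ)(A_γ⁻¹ A_max u) - λ u_ζ`. -/
lemma resolvent_Amax_sub (hRg : IsResolvent S.Agam lam Rg) (u : S.Amax.domain) :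
    Rg (S.Amax u - lam • (u : H)) = S.Agaminv (S.Amax u) - lam • Rg (S.uzeta u) := by
  have key : S.Amax u - lam • (u : H) =
      (S.Agam ⟨S.Agaminv (S.Amax u), S.Agaminv_mem _⟩ - lam • S.Agaminv (S.Amax u))
        - lam • S.uzeta u := by
    rw [S.Agaminv_right, uzeta]
    module
  rw [key, map_sub, map_smul, hRg.left]

lemma Eop_uzeta (hRg : IsResolvent S.Agam lam Rg) (u : S.Amax.domain) :
    Eop lam Rg (S.uzeta u) = S.uzetaL lam Rg u := by
  rw [uzetaL, S.resolvent_Amax_sub hRg, Eop_apply, uzeta]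
  module

lemma Eop'_vzeta (hR' : IsResolvent S.Agam.adjoint (conj lam) R') (v : S.Amax'.domain) :
    Eop' lam R' (S.vzeta v) = S.vzetaL lam R' v := by
  have key : S.Amax' v - conj lam • (v : H) =
      (S.Agam.adjoint ⟨S.Agamstarinv (S.Amax' v), S.Agamstarinv_mem _⟩
        - conj lam • S.Agamstarinv (S.Amax' v)) - conj lam • S.vzeta v := by
    rw [S.Agamstarinv_right, vzeta]
    module
  rw [vzetaL, key, map_sub, map_smul, hR'.left, Eop'_apply, vzeta]
  module

lemma Gval_sub (x y : H) : S.Gval At lam Rg (x - y) = S.Gval At lam Rg x - S.Gval At lam Rg y := by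
  simp only [Gval, map_sub, smul_sub]
  abel

lemma projW_Amax_add_Gval (hRg : IsResolvent S.Agam lam Rg) (u : S.Amax.domain) :
    S.projW At (S.Amax u) + S.Gval At lam Rg (S.uzeta u)
      = S.projW At (Eop lam Rg (S.Amax u - lam • (u : H))) := by
  have hE : Eop lam Rg (S.Amax u - lam • (u : H))
      = S.Amax u - lam • Eop lam Rg (S.uzeta u) := by
    rw [S.Eop_uzeta hRg, uzetaL, Eop_apply, S.resolvent_Amax_sub hRg, uzeta]
    module
  rw [Gval, hE, map_sub]
  abel

lemma inner_vzetaL_Amax_sub (h1 : S.Amin ≤ At) (h2 : At ≤ S.Amax)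
    (hRg : IsResolvent S.Agam lam Rg) (hR' : IsResolvent S.Agam.adjoint (conj lam) R')
    {u : S.Amax.domain} (hu : (u : H) ∈ At.domain)
    {v : S.Amax'.domain} (hv : (v : H) ∈ At.adjoint.domain) :
    ⟪S.vzetaL lam R' v, S.Amax u - lam • (u : H)⟫
      = ⟪S.Amax' v - conj lam • (v : H), S.uzetaL lam Rg u⟫ := by
  have hAt : Dense (At.domain : Set H) := S.dense_Amin.mono h1.1
  have hAu : At ⟨u, hu⟩ = S.Amax u := h2.2 rfl
  have hAv : At.adjoint ⟨v, hv⟩ = S.Amax' v :=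
    (adjoint_le_adjoint_of_le S.dense_Amin h1).2 rfl
  have hgreen : ⟪(v : H), S.Amax u - lam • (u : H)⟫
      = ⟪S.Amax' v - conj lam • (v : H), (u : H)⟫ := by
    rw [inner_sub_right, inner_smul_right, ← hAu, ← hAv,
      ← LinearPMap.adjoint_isFormalAdjoint hAt ⟨v, hv⟩ ⟨u, hu⟩, inner_sub_left, inner_smul_left,
      Complex.conj_conj]
  have hres : ⟪R' (S.Amax' v - conj lam • (v : H)), S.Amax u - lam • (u : H)⟫
      = ⟪S.Amax' v - conj lam • (v : H), Rg (S.Amax u - lam • (u : H))⟫ := by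
    rw [← inner_conj_symm, ← hRg.inner_apply_left S.dense_Agam hR', inner_conj_symm]
  rw [vzetaL, uzetaL, inner_sub_left, hgreen, hres, inner_sub_right]

/-- If `E^λ (A_max - λ) u ⊥ W`, Green's formula makes `E^λ u_ζ` orthogonal to the range of
`Ã* - λ̄`, which is all of `H`. -/
lemma uzeta_eq_zero_of_projW_Eop_eq_zero (h1 : S.Amin ≤ At) (h2 : At ≤ S.Amax)
    (hRg : IsResolvent S.Agam lam Rg) (hRAt : IsResolvent At lam RAt)
    (hR' : IsResolvent S.Agam.adjoint (conj lam) R')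
    {u : S.Amax.domain} (hu : (u : H) ∈ At.domain)
    (h0 : S.projW At (Eop lam Rg (S.Amax u - lam • (u : H))) = 0) : S.uzeta u = 0 := by
  refine S.eq_zero_of_Eop_eq_zero hRg ((inner_self_eq_zero (𝕜 := ℂ)).mp ?_)
  obtain ⟨v, hv⟩ := hRAt.exists_adjoint_sub_smul_eq (S.dense_Amin.mono h1.1)
    (Eop lam Rg (S.uzeta u))
  set v' : S.Amax'.domain := ⟨v, (adjoint_le_adjoint_of_le S.dense_Amin h1).1 v.2⟩
  have hAv : At.adjoint v = S.Amax' v' := (adjoint_le_adjoint_of_le S.dense_Amin h1).2 rfl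
  have hvW : S.vzeta v' ∈ S.Wsub At :=
    Submodule.le_topologicalClosure _ (Submodule.subset_span ⟨v', v.2, rfl⟩)
  calc ⟪Eop lam Rg (S.uzeta u), Eop lam Rg (S.uzeta u)⟫
      = ⟪S.Amax' v' - conj lam • (v' : H), S.uzetaL lam Rg u⟫ := by
        rw [← hAv, hv, S.Eop_uzeta hRg]
    _ = ⟪S.vzeta v', Eop lam Rg (S.Amax u - lam • (u : H))⟫ := by
        rw [← S.inner_vzetaL_Amax_sub h1 h2 hRg hR' hu v.2, ← S.Eop'_vzeta hR',
          hRg.inner_Eop_right S.dense_Agam hR']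
    _ = ⟪S.vzeta v', S.projW At (Eop lam Rg (S.Amax u - lam • (u : H)))⟫ :=
        (inner_projCl_right_s14 _ hvW _).symm
    _ = 0 := by rw [h0, inner_zero_right]

lemma Eop'_mem_WLsub (hR' : IsResolvent S.Agam.adjoint (conj lam) R') {w : H}
    (hw : w ∈ S.Wsub At) : Eop' lam R' w ∈ S.WLsub At lam R' := by
  have hle : S.Wsub At ≤ (S.WLsub At lam R').comap (Eop' lam R' : H →ₗ[ℂ] H) := by
    refine Submodule.topologicalClosure_minimal _ ?_
      ((S.isClosed_WLsub At lam R').preimage (Eop' lam R').continuous)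
    rw [Submodule.span_le]
    rintro _ ⟨v, hv, rfl⟩
    rw [SetLike.mem_coe, Submodule.mem_comap, ContinuousLinearMap.coe_coe, S.Eop'_vzeta hR']
    exact Submodule.le_topologicalClosure _ (Submodule.subset_span ⟨v, hv, rfl⟩)
  exact hle hw

lemma eq_projW_Eop_of_inner (hRg : IsResolvent S.Agam lam Rg)
    (hR' : IsResolvent S.Agam.adjoint (conj lam) R') {f r : H} (hr : r ∈ S.Wsub At)
    (h : ∀ w ∈ S.Wsub At, ⟪r, w⟫ = ⟪S.projWL At lam R' f, Eop' lam R' w⟫) :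
    r = S.projW At (Eop lam Rg f) := by
  have hperp : ∀ w ∈ S.Wsub At, ⟪r - S.projW At (Eop lam Rg f), w⟫ = 0 := fun w hw => by
    rw [inner_sub_left, h w hw, projWL, inner_projCl_left_s14 _ _ (S.Eop'_mem_WLsub hR' hw), projW,
      inner_projCl_left_s14 _ _ hw, hRg.inner_Eop_left S.dense_Agam hR', sub_self]
  exact sub_eq_zero.mp <| (inner_self_eq_zero (𝕜 := ℂ)).mp <|
    hperp _ <| sub_mem hr (projCl_mem _ _)

end Setup

namespace Setup

variable (S : Setup H) {lam : ℂ} {Rg RAt R' : H →L[ℂ] H} {At : H →ₗ.[ℂ] H}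

def ofResolvent (h2 : At ≤ S.Amax) (hRAt : IsResolvent At lam RAt) (f : H) : S.Amax.domain :=
  ⟨RAt f, h2.1 (hRAt.mem f)⟩

section

variable (h2 : At ≤ S.Amax) (hRAt : IsResolvent At lam RAt)

lemma Amax_sub_ofResolvent (f : H) :
    S.Amax (S.ofResolvent h2 hRAt f) - lam • (S.ofResolvent h2 hRAt f : H) = f := by
  rw [← h2.2 (x := ⟨RAt f, hRAt.mem f⟩) rfl]
  exact hRAt.right f

lemma projW_Amax_add_Gval_ofResolvent (hRg : IsResolvent S.Agam lam Rg) (f : H) :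
    S.projW At (S.Amax (S.ofResolvent h2 hRAt f))
        + S.Gval At lam Rg (S.uzeta (S.ofResolvent h2 hRAt f)) = S.projW At (Eop lam Rg f) := by
  rw [S.projW_Amax_add_Gval hRg, S.Amax_sub_ofResolvent]

lemma Eop_uzeta_ofResolvent (hRg : IsResolvent S.Agam lam Rg) (f : H) :
    Eop lam Rg (S.uzeta (S.ofResolvent h2 hRAt f)) = RAt f - Rg f := by
  rw [S.Eop_uzeta hRg, uzetaL, S.Amax_sub_ofResolvent]
  rfl

lemma Mval_eq_neg_uzeta (w : H) :
    S.Mval At h2 hRAt w = -S.uzeta (S.ofResolvent h2 hRAt (w - lam • S.Agaminv w)) := by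
  have hsplit : (⟨S.Agaminv w - RAt (w - lam • S.Agaminv w), S.mem_Amax_res At h2 hRAt w⟩
      : S.Amax.domain) = ⟨S.Agaminv w, S.Agam_le_max.1 (S.Agaminv_mem w)⟩
        - S.ofResolvent h2 hRAt (w - lam • S.Agaminv w) := rfl
  rw [Mval, hsplit, S.uzeta_sub, S.uzeta_Agaminv, zero_sub]

end

section Graph

variable {T : H →ₗ.[ℂ] H}

lemma eq_zero_of_mem_graph_of_add_Gval_eq_zero (hT : (T.graph : Set (H × H)) = S.Tgraph At)
    (h1 : S.Amin ≤ At) (h2 : At ≤ S.Amax) (hRg : IsResolvent S.Agam lam Rg)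
    (hRAt : IsResolvent At lam RAt) (hR' : IsResolvent S.Agam.adjoint (conj lam) R')
    {x y : H} (hxy : (x, y) ∈ T.graph) (h0 : y + S.Gval At lam Rg x = 0) : x = 0 := by
  rw [← SetLike.mem_coe, hT] at hxy
  obtain ⟨u, hu, rfl, rfl⟩ := hxy
  refine S.uzeta_eq_zero_of_projW_Eop_eq_zero h1 h2 hRg hRAt hR' hu ?_
  rw [← S.projW_Amax_add_Gval hRg]
  exact h0

lemma fst_eq_of_mem_graph_of_add_Gval_eq (hT : (T.graph : Set (H × H)) = S.Tgraph At)
    (h1 : S.Amin ≤ At) (h2 : At ≤ S.Amax) (hRg : IsResolvent S.Agam lam Rg)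
    (hRAt : IsResolvent At lam RAt) (hR' : IsResolvent S.Agam.adjoint (conj lam) R')
    {x y x' y' : H} (hxy : (x, y) ∈ T.graph) (hxy' : (x', y') ∈ T.graph)
    (h : y + S.Gval At lam Rg x = y' + S.Gval At lam Rg x') :
    x = x' := by
  have hsub := T.graph.sub_mem hxy hxy'
  rw [Prod.mk_sub_mk] at hsub
  refine sub_eq_zero.mp (S.eq_zero_of_mem_graph_of_add_Gval_eq_zero hT h1 h2 hRg hRAt hR' hsub ?_)
  rw [S.Gval_sub, ← add_sub_add_comm, h, sub_self]

end Graph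

end Setup

theorem statement_14_general (S : Setup H) (At : H →ₗ.[ℂ] H)
    (h1 : S.Amin ≤ At) (h2 : At ≤ S.Amax)
    (T : H →ₗ.[ℂ] H) (hT : (T.graph : Set (H × H)) = S.Tgraph At)
    (lam : ℂ) (Rg RAt R' : H →L[ℂ] H)
    (hRg : IsResolvent S.Agam lam Rg) (hRAt : IsResolvent At lam RAt)
    (hR' : IsResolvent S.Agam.adjoint (starRingEnd ℂ lam) R') :
    (∀ w : H, w ∈ S.Wsub At →
      ∃! x : H, ∃ y : H, (x, y) ∈ T.graph ∧ y + S.Gval At lam Rg x = w) ∧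
    (∀ w : H, w ∈ S.Wsub At → ∀ x y : H, (x, y) ∈ T.graph →
      y + S.Gval At lam Rg x = w → S.Mval At h2 hRAt w = -x) ∧
    (∀ f r : H, r ∈ S.Wsub At →
      (∀ w : H, w ∈ S.Wsub At →
        (inner ℂ r w : ℂ) = (inner ℂ (S.projWL At lam R' f) (Eop' lam R' w) : ℂ)) →
      RAt f = Rg f - Eop lam Rg (S.Mval At h2 hRAt r)) := by
  set u := S.ofResolvent h2 hRAt
  have hmem (f : H) : (S.uzeta (u f), S.projW At (S.Amax (u f))) ∈ T.graph := by
    rw [← SetLike.mem_coe, hT]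
    exact ⟨u f, hRAt.mem f, rfl, rfl⟩
  have hsum := S.projW_Amax_add_Gval_ofResolvent h2 hRAt hRg
  have huniq {x y x' y' : H} := S.fst_eq_of_mem_graph_of_add_Gval_eq (x := x) (y := y) (x' := x')
    (y' := y') hT h1 h2 hRg hRAt hR'
  have hsol : ∀ w ∈ S.Wsub At, S.projW At (S.Amax (u (w - lam • S.Agaminv w)))
      + S.Gval At lam Rg (S.uzeta (u (w - lam • S.Agaminv w))) = w := fun w hw => by
    rw [hsum, S.Eop_sub_smul_Agaminv hRg]
    exact projCl_eq_self _ hw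
  have hM : ∀ w ∈ S.Wsub At, ∀ x y : H, (x, y) ∈ T.graph →
      y + S.Gval At lam Rg x = w → S.Mval At h2 hRAt w = -x := fun w hw x y hxy h => by
    rw [S.Mval_eq_neg_uzeta h2 hRAt, huniq (hmem _) hxy ((hsol w hw).trans h.symm)]
  refine ⟨fun w hw => ⟨_, ⟨_, hmem _, hsol w hw⟩, fun x ⟨y, hxy, h⟩ =>
    huniq hxy (hmem _) (h.trans (hsol w hw).symm)⟩, hM, fun f r hr hinner => ?_⟩
  obtain rfl : r = S.projW At (Eop lam Rg f) := S.eq_projW_Eop_of_inner hRg hR' hr hinner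
  rw [hM _ hr _ _ (hmem f) (hsum f), map_neg, S.Eop_uzeta_ofResolvent h2 hRAt hRg]
  abel

theorem statement_14 (S : Setup H) (At : H →ₗ.[ℂ] H)
    (h1 : S.Amin ≤ At) (h2 : At ≤ S.Amax)
    (hcl : IsClosed (At.graph : Set (H × H)))
    (T : H →ₗ.[ℂ] H) (hT : (T.graph : Set (H × H)) = S.Tgraph At)
    (lam : ℂ) (Rg RAt R' : H →L[ℂ] H)
    (hRg : IsResolvent S.Agam lam Rg) (hRAt : IsResolvent At lam RAt)
    (hR' : IsResolvent S.Agam.adjoint (starRingEnd ℂ lam) R') :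
    (∀ w : H, w ∈ S.Wsub At →
      ∃! x : H, ∃ y : H, (x, y) ∈ T.graph ∧ y + S.Gval At lam Rg x = w) ∧
    (∀ w : H, w ∈ S.Wsub At → ∀ x y : H, (x, y) ∈ T.graph →
      y + S.Gval At lam Rg x = w → S.Mval At h2 hRAt w = -x) ∧
    (∀ f r : H, r ∈ S.Wsub At →
      (∀ w : H, w ∈ S.Wsub At →
        (inner ℂ r w : ℂ) = (inner ℂ (S.projWL At lam R' f) (Eop' lam R' w) : ℂ)) →
      RAt f = Rg f - Eop lam Rg (S.Mval At h2 hRAt r)) :=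
  statement_14_general S At h1 h2 T hT lam Rg RAt R' hRg hRAt hR'

end GrubbExt
end
end
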